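/- arXiv:1910.13297 — 7 statements merged into one kernel-verified Lean document; each statement's English description precedes it below -/
import Mathlib

section
/- Let G be a connected graph with edge weights w, let T be a minimum-weight spanning tree of G, and let T' be any spanning tree of G. Then there exists an exchange bijection φ : E(T) → E(T') (i.e., for each e ∈ E(T), T − e + φ(e) is a spanning tree) such that w(e) ≤ w(φ(e)) for all e ∈ E(T). -/
/-- Connectivity of the multigraph with vertex set `V` using only the edges in `S`. -/
def EdgeConn {V E : Type*} (ends : E → Sym2 V) (S : Set E) : Prop :=
  ∀ a b : V, Relation.ReflTransGen (fun x y => ∃ e ∈ S, ends e = s(x, y)) a b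

/-- `T` is a spanning tree: its edges connect all of `V` and every edge is a bridge. -/
def IsSpanningTree {V E : Type*} [DecidableEq E] (ends : E → Sym2 V) (T : Finset E) : Prop :=
  EdgeConn ends ↑T ∧ ∀ e ∈ T, ¬ EdgeConn ends ↑(T.erase e)

/-!
Join `e ∈ T` to every `f ∈ T'` whose ends lie in different components of `T - e`; a perfect
matching of this bipartite graph is an exchange bijection, and minimality of `T` makes every
exchange non-decreasing. Hall's condition holds: for `X ⊆ T`, an edge of `T'` not adjacent to
`X` has its ends linked in every `T - e` with `e ∈ X`, hence in `T \ X`, so `T \ X` together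
with the neighbours of `X` spans a connected graph and has at least `|V| - 1 = |T|` edges.
Edge counts are compared by counting components: adding an edge lowers their number by at
most one, and by exactly one when it joins two of them.
-/

open Finset

section SpanningTrees

theorem Sym2.exists_eq_mk {α : Type*} (z : Sym2 α) : ∃ a b, z = s(a, b) :=
  ⟨_, _, (Quot.out_eq z).symm⟩

open Classical in
theorem Finset.exists_bijOn_of_card_le_card_filter {α : Type*} {s t : Finset α}
    {r : α → α → Prop} (hts : #t ≤ #s) (hall : ∀ X ⊆ s, #X ≤ #{b ∈ t | ∃ a ∈ X, r a b}) :
    ∃ φ : α → α, Set.BijOn φ s t ∧ ∀ a ∈ s, r a (φ a) := by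
  obtain ⟨g, hg_inj, hg⟩ := (all_card_le_biUnion_card_iff_exists_injective
    fun a : s => {b ∈ t | r a b}).mp fun X => by
      refine (card_map (Function.Embedding.subtype _)).symm.le.trans
        ((hall _ fun a ha => ?_).trans (card_le_card ?_))
      · obtain ⟨⟨a, has⟩, -, rfl⟩ := mem_map.mp ha
        exact has
      · intro b hb
        obtain ⟨hbt, a, ha, hab⟩ := mem_filter.mp hb
        obtain ⟨a, haX, rfl⟩ := mem_map.mp ha
        exact mem_biUnion.mpr ⟨a, haX, mem_filter.mpr ⟨hbt, hab⟩⟩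
  simp only [mem_filter] at hg
  let φ a := if h : a ∈ s then g ⟨a, h⟩ else a
  have hφ a (ha : a ∈ s) : φ a = g ⟨a, ha⟩ := dif_pos ha
  have hmaps : Set.MapsTo φ s t := fun a ha => hφ a ha ▸ (hg ⟨a, ha⟩).1
  have hinj : Set.InjOn φ s := fun a ha b hb hab => by
    rw [hφ a ha, hφ b hb] at hab
    exact congrArg Subtype.val (hg_inj hab)
  exact ⟨φ, ⟨hmaps, hinj, surjOn_of_injOn_of_card_le φ hmaps hinj hts⟩,
    fun a ha => hφ a ha ▸ (hg ⟨a, ha⟩).2⟩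

variable {V E : Type*} {ends : E → Sym2 V}

variable (ends) in
def Linked (S : Finset E) : V → V → Prop :=
  Relation.ReflTransGen fun x y => ∃ e ∈ S, ends e = s(x, y)

namespace Linked

variable {S S' : Finset E} {e : E} {a b x y z : V}

theorem refl (x : V) : Linked ends S x x := Relation.ReflTransGen.refl

theorem trans (hxy : Linked ends S x y) (hyz : Linked ends S y z) : Linked ends S x z :=
  Relation.ReflTransGen.trans hxy hyz

theorem of_mem (he : e ∈ S) (hab : ends e = s(a, b)) : Linked ends S a b :=
  .single ⟨e, he, hab⟩

theorem symm (h : Linked ends S x y) : Linked ends S y x := by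
  induction h with
  | refl => exact refl _
  | tail _ hstep ih =>
    obtain ⟨e, he, hends⟩ := hstep
    exact (of_mem he (hends.trans Sym2.eq_swap)).trans ih

theorem of_forall_edge (hS : ∀ e ∈ S, ∀ a b, ends e = s(a, b) → Linked ends S' a b)
    (h : Linked ends S x y) : Linked ends S' x y := by
  induction h with
  | refl => exact refl _
  | tail _ hstep ih =>
    obtain ⟨e, he, hends⟩ := hstep
    exact ih.trans (hS e he _ _ hends)

theorem mono (hSS' : S ⊆ S') (h : Linked ends S x y) : Linked ends S' x y :=
  h.of_forall_edge fun _ he _ _ hab => of_mem (hSS' he) hab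

variable [DecidableEq E]

theorem of_insert (hab : ends e = s(a, b)) (h : Linked ends (insert e S) x y) :
    Linked ends S x y ∨ (Linked ends S x a ∧ Linked ends S b y) ∨
      (Linked ends S x b ∧ Linked ends S a y) := by
  induction h with
  | refl => exact Or.inl (refl _)
  | @tail z y _ hstep ih =>
    obtain ⟨g, hg, hends⟩ := hstep
    rcases mem_insert.mp hg with rfl | hgS
    · rcases Sym2.eq_iff.mp (hab.symm.trans hends) with ⟨rfl, rfl⟩ | ⟨rfl, rfl⟩
      · rcases ih with h | ⟨h, -⟩ | ⟨h, -⟩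
        · exact Or.inr (Or.inl ⟨h, refl _⟩)
        · exact Or.inr (Or.inl ⟨h, refl _⟩)
        · exact Or.inl h
      · rcases ih with h | ⟨h, -⟩ | ⟨h, -⟩
        · exact Or.inr (Or.inr ⟨h, refl _⟩)
        · exact Or.inl h
        · exact Or.inr (Or.inr ⟨h, refl _⟩)
    · have hzy : Linked ends S z y := of_mem hgS hends
      rcases ih with h | ⟨h₁, h₂⟩ | ⟨h₁, h₂⟩
      · exact Or.inl (h.trans hzy)
      · exact Or.inr (Or.inl ⟨h₁, h₂.trans hzy⟩)
      · exact Or.inr (Or.inr ⟨h₁, h₂.trans hzy⟩)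

end Linked

variable (ends) in
def linkedSetoid (S : Finset E) : Setoid V where
  r := Linked ends S
  iseqv := ⟨Linked.refl, Linked.symm, Linked.trans⟩

variable (ends) in
noncomputable def numComponents (S : Finset E) : ℕ :=
  Nat.card (Quotient (linkedSetoid ends S))

section numComponents

theorem numComponents_eq_one [Nonempty V] {S : Finset E} (hS : EdgeConn ends ↑S) :
    numComponents ends S = 1 := by
  have : Subsingleton (Quotient (linkedSetoid ends S)) :=
    ⟨fun x y => Quotient.inductionOn₂ x y fun x y => Quotient.sound (hS x y)⟩
  have : Nonempty (Quotient (linkedSetoid ends S)) := ⟨⟦Classical.arbitrary V⟧⟩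
  exact Nat.card_unique

variable [Fintype V]

theorem numComponents_empty : numComponents ends (∅ : Finset E) = Fintype.card V := by
  have hempty {x y : V} (h : Linked ends ∅ x y) : x = y := by
    induction h with
    | refl => rfl
    | tail _ hstep => simp at hstep
  rw [numComponents, ← Nat.card_eq_fintype_card]
  exact (Nat.card_eq_of_bijective _ ⟨fun x y h => hempty (Quotient.exact h),
    Quotient.mk_surjective⟩).symm

variable [DecidableEq E]

theorem numComponents_le_numComponents_insert_add_one (S : Finset E) (e : E) :
    numComponents ends S ≤ numComponents ends (insert e S) + 1 := by
  classical
  obtain ⟨a, b, hab⟩ := (ends e).exists_eq_mk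
  let q : Quotient (linkedSetoid ends S) → Quotient (linkedSetoid ends (insert e S)) :=
    Quotient.map id fun _ _ h => h.mono (subset_insert e S)
  -- only the class of `a` may be glued to another one
  let g x : Option (Quotient (linkedSetoid ends (insert e S))) :=
    if x = ⟦a⟧ then none else some (q x)
  have hg : Function.Injective g := by
    intro x y hxy
    induction x using Quotient.inductionOn with | h x => ?_
    induction y using Quotient.inductionOn with | h y => ?_
    by_cases hx : ⟦x⟧ = (⟦a⟧ : Quotient (linkedSetoid ends S)) <;>
      by_cases hy : ⟦y⟧ = (⟦a⟧ : Quotient (linkedSetoid ends S)) <;>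
      simp only [g, hx, hy, if_true, if_false, reduceCtorEq, Option.some_inj] at hxy
    · exact hx.trans hy.symm
    · rcases (Quotient.exact hxy).of_insert hab with h | ⟨h, -⟩ | ⟨-, h⟩
      · exact Quotient.sound h
      · exact absurd (Quotient.sound h) hx
      · exact absurd (Quotient.sound h.symm) hy
  simpa [numComponents, Finite.card_option] using Nat.card_le_card_of_injective g hg

theorem numComponents_insert_lt {S : Finset E} {e : E} {a b : V} (hab : ends e = s(a, b))
    (hnot : ¬ Linked ends S a b) : numComponents ends (insert e S) < numComponents ends S := by
  classical
  let q : Quotient (linkedSetoid ends S) → Quotient (linkedSetoid ends (insert e S)) :=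
    Quotient.map id fun _ _ h => h.mono (subset_insert e S)
  have hq_surj : Function.Surjective q := by
    rintro ⟨x⟩
    exact ⟨⟦x⟧, rfl⟩
  have hq_ab : q ⟦a⟧ = q ⟦b⟧ := Quotient.sound (Linked.of_mem (mem_insert_self e S) hab)
  have hq_not_inj : ¬ Function.Injective q := fun h => hnot (Quotient.exact (h hq_ab))
  simpa only [numComponents, Nat.card_eq_fintype_card] using
    Fintype.card_lt_of_surjective_not_injective q hq_surj hq_not_inj

theorem card_le_numComponents_add_card (S : Finset E) :
    Fintype.card V ≤ numComponents ends S + #S := by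
  induction S using Finset.induction_on with
  | empty => simp [numComponents_empty]
  | @insert e S he ih =>
    rw [card_insert_of_notMem he]
    have := numComponents_le_numComponents_insert_add_one (ends := ends) S e
    omega

end numComponents

namespace IsSpanningTree

variable [DecidableEq E] {T S : Finset E} {e : E} {a b : V}

theorem not_linked_erase (hT : IsSpanningTree ends T) (he : e ∈ T) (hab : ends e = s(a, b)) :
    ¬ Linked ends (T.erase e) a b := by
  intro hlinked
  refine hT.2 e he fun x y => ?_
  have hxy : Linked ends (insert e (T.erase e)) x y := by rw [insert_erase he]; exact hT.1 x y
  rcases hxy.of_insert hab with h | ⟨hxa, hby⟩ | ⟨hxb, hay⟩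
  · exact h
  · exact hxa.trans (hlinked.trans hby)
  · exact hxb.trans (hlinked.symm.trans hay)

theorem linked_erase_or_linked_erase (hT : IsSpanningTree ends T) (he : e ∈ T)
    (hab : ends e = s(a, b)) (x : V) :
    Linked ends (T.erase e) x a ∨ Linked ends (T.erase e) x b := by
  have hxa : Linked ends (insert e (T.erase e)) x a := by rw [insert_erase he]; exact hT.1 x a
  rcases hxa.of_insert hab with h | ⟨h, -⟩ | ⟨h, -⟩
  · exact Or.inl h
  · exact Or.inl h
  · exact Or.inr h

variable [Fintype V]

theorem numComponents_add_card_le (hT : IsSpanningTree ends T) (hS : S ⊆ T) :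
    numComponents ends S + #S ≤ Fintype.card V := by
  induction S using Finset.induction_on with
  | empty => simp [numComponents_empty]
  | @insert e S he ih =>
    have heT : e ∈ T := hS (mem_insert_self e S)
    obtain ⟨a, b, hab⟩ := (ends e).exists_eq_mk
    have hnot : ¬ Linked ends S a b := fun h =>
      hT.not_linked_erase heT hab (h.mono (subset_erase.mpr ⟨(subset_insert e S).trans hS, he⟩))
    have := numComponents_insert_lt hab hnot
    have := ih ((subset_insert e S).trans hS)
    rw [card_insert_of_notMem he]
    omega

theorem card_le_card_of_edgeConn (hT : IsSpanningTree ends T) (hS : EdgeConn ends ↑S) :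
    #T ≤ #S := by
  rcases T.eq_empty_or_nonempty with rfl | ⟨e, he⟩
  · simp
  obtain ⟨a, b, hab⟩ := (ends e).exists_eq_mk
  have : Nonempty V := ⟨a⟩
  have hTV := hT.numComponents_add_card_le subset_rfl
  have hVS := card_le_numComponents_add_card (ends := ends) S
  rw [numComponents_eq_one hT.1] at hTV
  rw [numComponents_eq_one hS] at hVS
  omega

theorem card_eq_card (hT : IsSpanningTree ends T) (hS : IsSpanningTree ends S) : #T = #S :=
  (hT.card_le_card_of_edgeConn hS.1).antisymm (hS.card_le_card_of_edgeConn hT.1)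

theorem of_edgeConn_of_card_le (hT : IsSpanningTree ends T) (hS : EdgeConn ends ↑S)
    (hST : #S ≤ #T) : IsSpanningTree ends S := by
  refine ⟨hS, fun e he hconn => ?_⟩
  have := hT.card_le_card_of_edgeConn hconn
  rw [card_erase_of_mem he] at this
  have := card_pos.mpr ⟨e, he⟩
  omega

end IsSpanningTree

variable [DecidableEq E]

variable (ends) in
def Reconnects (T : Finset E) (e f : E) : Prop :=
  ∃ c d, ends f = s(c, d) ∧ ¬ Linked ends (T.erase e) c d

variable {T : Finset E} {e f : E}

theorem Reconnects.notMem_erase (hf : Reconnects ends T e f) : f ∉ T.erase e := by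
  obtain ⟨c, d, hcd, hnot⟩ := hf
  exact fun hfT => hnot (.of_mem hfT hcd)

namespace IsSpanningTree

theorem linked_erase_or_of_not_linked (hT : IsSpanningTree ends T) (he : e ∈ T) {c d : V}
    (hnot : ¬ Linked ends (T.erase e) c d) (x : V) :
    Linked ends (T.erase e) x c ∨ Linked ends (T.erase e) x d := by
  obtain ⟨a, b, hab⟩ := (ends e).exists_eq_mk
  have hside := hT.linked_erase_or_linked_erase he hab
  rcases hside c with hc | hc <;> rcases hside d with hd | hd <;> rcases hside x with hx | hx
  all_goals first
    | exact absurd (hc.trans hd.symm) hnot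
    | exact .inl (hx.trans hc.symm)
    | exact .inr (hx.trans hd.symm)

theorem exchange [Fintype V] (hT : IsSpanningTree ends T) (he : e ∈ T)
    (hf : Reconnects ends T e f) : IsSpanningTree ends (insert f (T.erase e)) := by
  obtain ⟨c, d, hcd, hnot⟩ := hf
  set T₂ := insert f (T.erase e)
  have hmono : T.erase e ⊆ T₂ := subset_insert f _
  have hcd₂ : Linked ends T₂ c d := .of_mem (mem_insert_self f _) hcd
  have hto_c (x : V) : Linked ends T₂ x c := by
    rcases hT.linked_erase_or_of_not_linked he hnot x with hxc | hxd
    · exact hxc.mono hmono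
    · exact (hxd.mono hmono).trans hcd₂.symm
  refine hT.of_edgeConn_of_card_le (fun x y => (hto_c x).trans (hto_c y).symm) ?_
  rw [card_insert_of_notMem (Reconnects.notMem_erase ⟨c, d, hcd, hnot⟩), card_erase_of_mem he]
  have := card_pos.mpr ⟨e, he⟩
  omega

theorem linked_sdiff (hT : IsSpanningTree ends T) {X : Finset E} (hX : X ⊆ T) {c d : V}
    (h : ∀ e ∈ X, Linked ends (T.erase e) c d) : Linked ends (T \ X) c d := by
  induction X using Finset.induction_on with
  | empty => rw [sdiff_empty]; exact hT.1 c d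
  | @insert e X he ih =>
    have heT : e ∈ T := hX (mem_insert_self e X)
    have hcd : Linked ends (insert e ((T \ X).erase e)) c d := by
      rw [insert_erase (mem_sdiff.mpr ⟨heT, he⟩)]
      exact ih ((subset_insert e X).trans hX) fun g hg => h g (mem_insert_of_mem hg)
    have hcd' : Linked ends (T.erase e) c d := h e (mem_insert_self e X)
    have hsub : (T \ X).erase e ⊆ T.erase e := erase_subset_erase e sdiff_subset
    obtain ⟨a, b, hab⟩ := (ends e).exists_eq_mk
    rw [sdiff_insert]
    rcases hcd.of_insert hab with h | ⟨hca, hbd⟩ | ⟨hcb, had⟩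
    · exact h
    · exact absurd (((hca.mono hsub).symm.trans hcd').trans (hbd.mono hsub).symm)
        (hT.not_linked_erase heT hab)
    · exact absurd ((had.mono hsub).trans (hcd'.symm.trans (hcb.mono hsub)))
        (hT.not_linked_erase heT hab)

open Classical in
theorem card_le_card_filter_reconnects [Fintype V] {T' X : Finset E}
    (hT : IsSpanningTree ends T) (hT' : IsSpanningTree ends T') (hX : X ⊆ T) :
    #X ≤ #{f ∈ T' | ∃ e ∈ X, Reconnects ends T e f} := by
  set N := {f ∈ T' | ∃ e ∈ X, Reconnects ends T e f}
  -- an edge of `T'` outside `N` is already spanned by `T \ X`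
  have hconn : EdgeConn ends ↑((T \ X) ∪ N) := fun x y => by
    refine Linked.of_forall_edge (fun f hf c d hcd => ?_) (hT'.1 x y)
    by_cases hfN : f ∈ N
    · exact .of_mem (mem_union_right _ hfN) hcd
    · refine (hT.linked_sdiff hX fun e he => ?_).mono subset_union_left
      by_contra hnot
      exact hfN (mem_filter.mpr ⟨hf, e, he, c, d, hcd, hnot⟩)
  have := hT.card_le_card_of_edgeConn hconn
  have := card_union_le (T \ X) N
  have := card_sdiff_of_subset hX
  have := card_le_card hX
  omega

theorem le_of_reconnects {M : Type*} [AddCommMonoid M] [PartialOrder M]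
    [IsOrderedCancelAddMonoid M] [Fintype V] (w : E → M) (hT : IsSpanningTree ends T)
    (hmin : ∀ S : Finset E, IsSpanningTree ends S → ∑ e ∈ T, w e ≤ ∑ e ∈ S, w e)
    (he : e ∈ T) (hf : Reconnects ends T e f) : w e ≤ w f := by
  have := hmin _ (hT.exchange he hf)
  rw [sum_insert hf.notMem_erase, ← add_sum_erase T w he] at this
  exact le_of_add_le_add_right this

end IsSpanningTree

end SpanningTrees

theorem stmt_1_general {V E : Type*} [Fintype V] [DecidableEq E]
    (ends : E → Sym2 V) (w : E → ℚ)
    (T T' : Finset E)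
    (hT : IsSpanningTree ends T)
    (hmin : ∀ S : Finset E, IsSpanningTree ends S → ∑ e ∈ T, w e ≤ ∑ e ∈ S, w e)
    (hT' : IsSpanningTree ends T') :
    ∃ φ : E → E, Set.BijOn φ ↑T ↑T' ∧
      (∀ e ∈ T, IsSpanningTree ends (insert (φ e) (T.erase e))) ∧
      (∀ e ∈ T, w e ≤ w (φ e)) := by
  obtain ⟨φ, hbij, hφ⟩ := exists_bijOn_of_card_le_card_filter (hT.card_eq_card hT').ge
    fun X hX => hT.card_le_card_filter_reconnects hT' hX
  exact ⟨φ, hbij, fun e he => hT.exchange he (hφ e he),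
    fun e he => hT.le_of_reconnects w hmin he (hφ e he)⟩

/-- **Monotone exchange bijections.** If `T` is a minimum-weight spanning tree of a connected
graph `G` and `T'` is any spanning tree of `G`, then there is an exchange bijection
`φ : E(T) → E(T')` (for each `e ∈ E(T)`, `T - e + φ(e)` is a spanning tree) with
`w e ≤ w (φ e)` for all `e ∈ E(T)`. -/
theorem stmt_1 {V E : Type*} [Fintype V] [Fintype E] [DecidableEq E]
    (ends : E → Sym2 V) (w : E → ℚ) (hw : ∀ e, 0 ≤ w e)
    (hconn : EdgeConn ends (Set.univ : Set E))
    (T T' : Finset E)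
    (hT : IsSpanningTree ends T)
    (hmin : ∀ S : Finset E, IsSpanningTree ends S → ∑ e ∈ T, w e ≤ ∑ e ∈ S, w e)
    (hT' : IsSpanningTree ends T') :
    ∃ φ : E → E, Set.BijOn φ ↑T ↑T' ∧
      (∀ e ∈ T, IsSpanningTree ends (insert (φ e) (T.erase e))) ∧
      (∀ e ∈ T, w e ≤ w (φ e)) :=
  stmt_1_general ends w T T' hT hmin hT'
end

section
/- Let G be a connected graph with edge weights w and safe-edge set F̄; define w_α as the weight function scaling safe edges by α ∈ [0,1]. If a safe edge e is contained in some α-minimum spanning tree, then for every α' with 0 ≤ α' ≤ α, there is some α'-minimum spanning tree containing e. -/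
/-- The weight function `w_α` scaling the weight of safe edges by `α`. -/
def scaledW {E : Type*} [DecidableEq E] (w : E → ℝ) (safe : Finset E) (α : ℝ) : E → ℝ :=
  fun e => if e ∈ safe then α * w e else w e

/-- `T` is an `α`-minimum spanning tree (minimal total weight w.r.t. `w_α`). -/
def IsAlphaMST {V E : Type*} [Fintype E] [DecidableEq E] (ends : E → Sym2 V)
    (w : E → ℝ) (safe : Finset E) (α : ℝ) (T : Finset E) : Prop :=
  IsSpanningTree ends T ∧
    ∀ T' : Finset E, IsSpanningTree ends T' →
      ∑ e ∈ T, scaledW w safe α e ≤ ∑ e ∈ T', scaledW w safe α e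

/-! An exchange argument. Let `T'` be any `α'`-MST; if `e ∉ T'`, the symmetric exchange property
of spanning trees gives `f ∈ T' \ T` such that both `T - e + f` and `T' - f + e` are spanning
trees. Minimality of `T` gives `w_α e ≤ w_α f`. Passing from `α` to `α' ≤ α` scales the safe edge
`e` down by at least as much as `f` (by the same factor if `f` is safe, not at all otherwise), so
`w_α' e ≤ w_α' f` and `T' - f + e` is an `α'`-MST containing `e`. -/

section Reachability

variable {V E : Type*} {ends : E → Sym2 V}

def EdgeAdj (ends : E → Sym2 V) (S : Set E) (x y : V) : Prop :=
  ∃ e ∈ S, ends e = s(x, y)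

instance (S : Set E) : Std.Symm (EdgeAdj ends S) :=
  ⟨fun _ _ ⟨e, heS, h⟩ => ⟨e, heS, h.trans Sym2.eq_swap⟩⟩

/-- `EdgeConn ends S` says exactly that `EdgeReach ends S` is total. -/
def EdgeReach (ends : E → Sym2 V) (S : Set E) : V → V → Prop :=
  Relation.ReflTransGen (EdgeAdj ends S)

namespace EdgeReach

variable {S S' : Set E} {a b : V}

lemma symm (h : EdgeReach ends S a b) : EdgeReach ends S b a :=
  symm_of (Relation.ReflTransGen (EdgeAdj ends S)) h

lemma mono (hSS' : S ⊆ S') (h : EdgeReach ends S a b) : EdgeReach ends S' a b :=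
  Relation.ReflTransGen.mono (fun _ _ ⟨e, heS, h⟩ => ⟨e, hSS' heS, h⟩) _ _ h

lemma trans {c : V} (hab : EdgeReach ends S a b) (hbc : EdgeReach ends S b c) :
    EdgeReach ends S a c :=
  Relation.ReflTransGen.trans hab hbc

lemma single {e : E} {x y : V} (heS : e ∈ S) (he : ends e = s(x, y)) : EdgeReach ends S x y :=
  Relation.ReflTransGen.single (r := EdgeAdj ends S) ⟨e, heS, he⟩

lemma insert_cases {f : E} {x y : V} (hf : ends f = s(x, y))
    (h : EdgeReach ends (insert f S) a b) :
    EdgeReach ends S a b ∨ (EdgeReach ends S a x ∧ EdgeReach ends S y b) ∨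
      (EdgeReach ends S a y ∧ EdgeReach ends S x b) := by
  induction h with
  | refl => exact .inl .refl
  | tail _ hstep ih =>
    obtain ⟨e', he', hends⟩ := hstep
    rcases Set.mem_insert_iff.mp he' with rfl | hmem
    · rw [hf] at hends
      rcases Sym2.eq_iff.mp hends with ⟨rfl, rfl⟩ | ⟨rfl, rfl⟩
      · rcases ih with h | ⟨h, _⟩ | ⟨h, _⟩
        · exact .inr (.inl ⟨h, .refl⟩)
        · exact .inr (.inl ⟨h, .refl⟩)
        · exact .inl h
      · rcases ih with h | ⟨h, _⟩ | ⟨h, _⟩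
        · exact .inr (.inr ⟨h, .refl⟩)
        · exact .inl h
        · exact .inr (.inr ⟨h, .refl⟩)
    · have hstep : EdgeAdj ends S _ _ := ⟨e', hmem, hends⟩
      rcases ih with h | ⟨ha, hb⟩ | ⟨ha, hb⟩
      · exact .inl (h.tail hstep)
      · exact .inr (.inl ⟨ha, hb.tail hstep⟩)
      · exact .inr (.inr ⟨ha, hb.tail hstep⟩)

lemma of_insert {e : E} {u v : V} (he : ends e = s(u, v)) (huv : EdgeReach ends S u v)
    (h : EdgeReach ends (insert e S) a b) : EdgeReach ends S a b := by
  rcases insert_cases he h with h | ⟨hau, hvb⟩ | ⟨hav, hub⟩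
  · exact h
  · exact hau.trans (huv.trans hvb)
  · exact hav.trans (huv.symm.trans hub)

lemma exists_crossing {A : Set V} (h : EdgeReach ends S a b) (ha : a ∈ A) (hb : b ∉ A) :
    ∃ f ∈ S, ∃ x y, ends f = s(x, y) ∧ x ∈ A ∧ y ∉ A := by
  induction h with
  | refl => exact absurd ha hb
  | @tail c d _ hstep ih =>
    obtain ⟨f, hfS, hf⟩ := hstep
    by_cases hc : c ∈ A
    · exact ⟨f, hfS, c, d, hf, hc, hb⟩
    · exact ih hc

lemma exists_minimal_subset [DecidableEq E] {u v : V} {C : Finset E}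
    (h : EdgeReach ends ↑C u v) :
    ∃ D ⊆ C, EdgeReach ends ↑D u v ∧ ∀ f ∈ D, ¬ EdgeReach ends ↑(D.erase f) u v := by
  induction C using Finset.strongInduction with
  | _ C ih =>
    by_cases hmin : ∀ f ∈ C, ¬ EdgeReach ends ↑(C.erase f) u v
    · exact ⟨C, subset_rfl, h, hmin⟩
    · push Not at hmin
      obtain ⟨f, hf, hreach⟩ := hmin
      obtain ⟨D, hD, hDuv, hDmin⟩ := ih (C.erase f) (Finset.erase_ssubset hf) hreach
      exact ⟨D, hD.trans (Finset.erase_subset f C), hDuv, hDmin⟩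

end EdgeReach

lemma EdgeConn.edgeReach_erase_or [DecidableEq E] {T : Finset E} (hT : EdgeConn ends ↑T)
    {e : E} (he : e ∈ T) {u v : V} (heuv : ends e = s(u, v)) (z : V) :
    EdgeReach ends ↑(T.erase e) u z ∨ EdgeReach ends ↑(T.erase e) v z := by
  have huz : EdgeReach ends (insert e ↑(T.erase e)) u z := by
    rw [← Finset.coe_insert, Finset.insert_erase he]
    exact hT u z
  rcases EdgeReach.insert_cases heuv huz with h | ⟨_, h⟩ | ⟨_, h⟩
  · exact .inl h
  · exact .inr h
  · exact .inl h

end Reachability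

namespace IsSpanningTree

variable {V E : Type*} [DecidableEq E] {ends : E → Sym2 V} {T : Finset E}

lemma not_edgeReach_erase (hT : IsSpanningTree ends T) {g : E} (hg : g ∈ T) {p q : V}
    (hpq : ends g = s(p, q)) : ¬ EdgeReach ends ↑(T.erase g) p q := fun h =>
  hT.2 g hg fun a b => EdgeReach.of_insert hpq h <| by
    rw [← Finset.coe_insert, Finset.insert_erase hg]
    exact hT.1 a b

lemma exchange_s3 (hT : IsSpanningTree ends T) {e f : E} (he : e ∈ T) (hf : f ∉ T)
    {u v x y : V} (heuv : ends e = s(u, v)) (hfxy : ends f = s(x, y))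
    (hux : EdgeReach ends ↑(T.erase e) u x) (hyv : EdgeReach ends ↑(T.erase e) y v) :
    IsSpanningTree ends (insert f (T.erase e)) := by
  set S : Set E := ↑(T.erase e)
  have hfS : f ∉ T.erase e := fun h => hf (Finset.mem_of_mem_erase h)
  have hSuv : ¬ EdgeReach ends S u v := hT.not_edgeReach_erase he heuv
  have hsub : S ⊆ insert f S := Set.subset_insert _ _
  rw [IsSpanningTree, Finset.coe_insert]
  refine ⟨fun a b => ?_, fun g hg => ?_⟩
  · have huv : EdgeReach ends (insert f S) u v :=
      ((hux.mono hsub).trans (EdgeReach.single (Set.mem_insert _ _) hfxy)).trans (hyv.mono hsub)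
    refine EdgeReach.of_insert heuv huv (EdgeReach.mono ?_ (hT.1 a b))
    rw [← Finset.coe_insert, ← Finset.coe_insert, Finset.insert_comm, Finset.insert_erase he]
    exact Finset.coe_subset.mpr (Finset.subset_insert _ _)
  rcases Finset.mem_insert.mp hg with rfl | hgS
  · rw [Finset.erase_insert hfS]
    exact fun hconn => hSuv (hconn u v)
  -- deleting another edge `g = pq`: a `p`–`q` path through `f` would close a `u`–`v` path in `S`
  obtain ⟨p, q, hpq⟩ := Sym2.exists.mp ⟨ends g, rfl⟩
  have hgf : g ≠ f := fun h => hfS (h ▸ hgS)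
  rw [Finset.erase_insert_of_ne hgf.symm, Finset.coe_insert]
  intro hconn
  have hsub' : (↑((T.erase e).erase g) : Set E) ⊆ S :=
    Finset.coe_subset.mpr (Finset.erase_subset _ _)
  have hpq' : EdgeReach ends S p q := .single hgS hpq
  rcases EdgeReach.insert_cases hfxy (hconn p q) with h | ⟨hpx, hyq⟩ | ⟨hpy, hxq⟩
  · refine hT.not_edgeReach_erase (Finset.mem_of_mem_erase hgS) hpq (h.mono ?_)
    exact Finset.coe_subset.mpr (Finset.erase_subset_erase g (Finset.erase_subset e T))
  · exact hSuv ((hux.trans (hpx.mono hsub').symm).trans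
      ((hpq'.trans (hyq.mono hsub').symm).trans hyv))
  · exact hSuv ((hux.trans (hxq.mono hsub')).trans
      ((hpq'.symm.trans (hpy.mono hsub')).trans hyv))

lemma exchange_of_mem_minimal (hT : IsSpanningTree ends T) {e f : E} {u v : V}
    (heuv : ends e = s(u, v)) (he : e ∉ T) {D : Finset E} (hDT : D ⊆ T)
    (hDuv : EdgeReach ends ↑D u v) (hDmin : ∀ g ∈ D, ¬ EdgeReach ends ↑(D.erase g) u v)
    (hfD : f ∈ D) : IsSpanningTree ends (insert e (T.erase f)) := by
  obtain ⟨x, y, hfxy⟩ := Sym2.exists.mp ⟨ends f, rfl⟩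
  have hfT : f ∈ T := hDT hfD
  have hsub : (↑(D.erase f) : Set E) ⊆ ↑(T.erase f) :=
    Finset.coe_subset.mpr (Finset.erase_subset_erase f hDT)
  rw [← Finset.insert_erase hfD, Finset.coe_insert] at hDuv
  rcases EdgeReach.insert_cases hfxy hDuv with h | ⟨hux, hyv⟩ | ⟨huy, hxv⟩
  · exact absurd h (hDmin f hfD)
  · exact hT.exchange_s3 hfT he hfxy heuv (hux.mono hsub).symm (hyv.mono hsub).symm
  · exact hT.exchange_s3 hfT he (hfxy.trans Sym2.eq_swap) heuv (huy.mono hsub).symm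
      (hxv.mono hsub).symm

lemma exists_exchange_pair {T' : Finset E} (hT : IsSpanningTree ends T)
    (hT' : IsSpanningTree ends T') {e : E} (heT : e ∈ T) (heT' : e ∉ T') :
    ∃ f ∈ T', f ∉ T ∧ IsSpanningTree ends (insert f (T.erase e)) ∧
      IsSpanningTree ends (insert e (T'.erase f)) := by
  obtain ⟨u, v, heuv⟩ := Sym2.exists.mp ⟨ends e, rfl⟩
  obtain ⟨D, hDT', hDuv, hDmin⟩ := EdgeReach.exists_minimal_subset (hT'.1 u v)
  -- `f` is an edge of the `T'`-path from `u` to `v` leaving the component of `u` in `T - e`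
  obtain ⟨f, hfD, x, y, hfxy, hux, hy⟩ :=
    hDuv.exists_crossing (A := {z | EdgeReach ends ↑(T.erase e) u z}) .refl
      (hT.not_edgeReach_erase heT heuv)
  have hfT : f ∉ T := fun hfT => hy <| hux.trans <|
    EdgeReach.single (Finset.mem_erase.mpr ⟨fun h => heT' (h ▸ hDT' hfD), hfT⟩) hfxy
  have hvy : EdgeReach ends ↑(T.erase e) v y := (hT.1.edgeReach_erase_or heT heuv y).resolve_left hy
  exact ⟨f, hDT' hfD, hfT, hT.exchange_s3 heT hfT heuv hfxy hux hvy.symm,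
    hT'.exchange_of_mem_minimal heuv heT' hDT' hDuv hDmin hfD⟩

end IsSpanningTree

section Weights

variable {E : Type*} [DecidableEq E] {w : E → ℝ} {safe : Finset E} {α α' : ℝ} {e f : E}

lemma sum_insert_erase_add {M : Type*} [AddCommMonoid M] (g : E → M) {T : Finset E}
    (he : e ∈ T) (hf : f ∉ T) : ∑ x ∈ insert f (T.erase e), g x + g e = ∑ x ∈ T, g x + g f := by
  rw [Finset.sum_insert fun h => hf (Finset.mem_of_mem_erase h), add_assoc,
    Finset.sum_erase_add _ _ he, add_comm]

lemma scaledW_le_scaledW_of_le (hwe : 0 ≤ w e) (hα' : 0 ≤ α') (hα'α : α' ≤ α) (he : e ∈ safe)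
    (hef : scaledW w safe α e ≤ scaledW w safe α f) :
    scaledW w safe α' e ≤ scaledW w safe α' f := by
  simp only [scaledW, he, if_true] at hef ⊢
  split_ifs at hef ⊢
  · rcases hα'.eq_or_lt with rfl | hpos
    · simp
    · exact mul_le_mul_of_nonneg_left (le_of_mul_le_mul_left hef (hpos.trans_le hα'α)) hα'
  · exact (mul_le_mul_of_nonneg_right hα'α hwe).trans hef

variable {V : Type*} [Fintype E] {ends : E → Sym2 V}

lemma exists_isAlphaMST (w : E → ℝ) (safe : Finset E) (α : ℝ) {T : Finset E}
    (hT : IsSpanningTree ends T) : ∃ T', IsAlphaMST ends w safe α T' := by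
  classical
  obtain ⟨T', hT', hmin⟩ := Finset.exists_min_image {T | IsSpanningTree ends T}
    (fun T => ∑ x ∈ T, scaledW w safe α x) ⟨T, by simpa using hT⟩
  exact ⟨T', (Finset.mem_filter.mp hT').2, fun T'' hT'' => hmin T'' (by simpa using hT'')⟩

namespace IsAlphaMST

variable {T : Finset E}

lemma scaledW_le_of_exchange (hT : IsAlphaMST ends w safe α T) (he : e ∈ T) (hf : f ∉ T)
    (hT₂ : IsSpanningTree ends (insert f (T.erase e))) :
    scaledW w safe α e ≤ scaledW w safe α f := by
  have := hT.2 _ hT₂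
  have := sum_insert_erase_add (scaledW w safe α) he hf
  linarith

lemma exchange_s3 (hT : IsAlphaMST ends w safe α T) (hf : f ∈ T) (he : e ∉ T)
    (hT₂ : IsSpanningTree ends (insert e (T.erase f)))
    (hef : scaledW w safe α e ≤ scaledW w safe α f) :
    IsAlphaMST ends w safe α (insert e (T.erase f)) := by
  refine ⟨hT₂, fun T'' hT'' => ?_⟩
  have := hT.2 T'' hT''
  have := sum_insert_erase_add (scaledW w safe α) hf he
  linarith

end IsAlphaMST

end Weights

theorem stmt_3_general {V E : Type*} [Fintype E] [DecidableEq E]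
    (ends : E → Sym2 V) (w : E → ℝ) (hw : ∀ e, 0 ≤ w e) (safe : Finset E)
    (α α' : ℝ) (hα' : 0 ≤ α') (hα'α : α' ≤ α)
    (e : E) (he : e ∈ safe)
    (T : Finset E) (hT : IsAlphaMST ends w safe α T) (heT : e ∈ T) :
    ∃ T' : Finset E, IsAlphaMST ends w safe α' T' ∧ e ∈ T' := by
  obtain ⟨T', hT'⟩ := exists_isAlphaMST w safe α' hT.1
  by_cases heT' : e ∈ T'
  · exact ⟨T', hT', heT'⟩
  obtain ⟨f, hfT', hfT, hT₁, hT₂⟩ := hT.1.exists_exchange_pair hT'.1 heT heT'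
  have hle : scaledW w safe α e ≤ scaledW w safe α f := hT.scaledW_le_of_exchange heT hfT hT₁
  exact ⟨_, hT'.exchange_s3 hfT' heT' hT₂ (scaledW_le_scaledW_of_le (hw e) hα' hα'α he hle),
    Finset.mem_insert_self _ _⟩

/-- If a safe edge `e` lies in some `α`-MST, then for every `α'` with `0 ≤ α' ≤ α`
some `α'`-MST contains `e`. -/
theorem stmt_3 {V E : Type*} [Fintype V] [Fintype E] [DecidableEq E]
    (ends : E → Sym2 V) (w : E → ℝ) (hw : ∀ e, 0 ≤ w e) (safe : Finset E)
    (hconn : EdgeConn ends (Set.univ : Set E))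
    (α α' : ℝ) (hα' : 0 ≤ α') (hα'α : α' ≤ α) (hα : α ≤ 1)
    (e : E) (he : e ∈ safe)
    (T : Finset E) (hT : IsAlphaMST ends w safe α T) (heT : e ∈ T) :
    ∃ T' : Finset E, IsAlphaMST ends w safe α' T' ∧ e ∈ T' :=
  stmt_3_general ends w hw safe α α' hα' hα'α e he T hT heT
end

section
/- Let H be a subgraph of a graph G such that (V(G), E(H)) is connected and H − f is connected for every unsafe edge f ∈ E(H). Then contracting all safe edges of H yields a 2-edge-connected graph. More generally, if H is a spanning subgraph of G such that H − F' is connected for every set F' of at most k unsafe edges, then H with all safe edges contracted is (k+1)-edge-connected. -/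
theorem EdgeConn.map {V W E : Type*} {ends : E → Sym2 V} {S T : Set E} (f : V → W)
    (hf : Function.Surjective f) (h : EdgeConn ends S)
    (hloop : ∀ e ∈ S, e ∉ T → ((ends e).map f).IsDiag) :
    EdgeConn (fun e => (ends e).map f) T := by
  intro a b
  obtain ⟨x, rfl⟩ := hf a
  obtain ⟨y, rfl⟩ := hf b
  refine (h x y).lift' f fun u v ⟨e, heS, hends⟩ => ?_
  by_cases heT : e ∈ T
  · exact .single ⟨e, heT, by simp only [hends, Sym2.map_mk]⟩
  · have huv : f u = f v := by
      simpa only [hends, Sym2.map_mk, Sym2.mk_isDiag_iff] using hloop e heS heT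
    simp only [Function.onFun, huv, Relation.ReflTransGen.refl]

theorem Sym2.isDiag_map_mk_eqvGen {V : Type*} {r : V → V → Prop} {z : Sym2 V}
    (hr : ∀ x y, z = s(x, y) → r x y) :
    (z.map (Quotient.mk (Relation.EqvGen.setoid r))).IsDiag := by
  induction z using Sym2.ind with
  | h x y =>
    rw [Sym2.map_mk, Sym2.mk_isDiag_iff]
    exact Quotient.sound (Relation.EqvGen.rel _ _ (hr x y rfl))

open scoped Classical in
theorem stmt_6_general {V E : Type*} [DecidableEq E]
    (ends : E → Sym2 V) (safe : Finset E) (k : ℕ) (H : Finset E)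
    (hfeas : ∀ F' : Finset E, F' ⊆ H → (∀ f ∈ F', f ∉ safe) → F'.card ≤ k →
      EdgeConn ends ↑(H \ F')) :
    let s : Setoid V := Relation.EqvGen.setoid (fun x y => ∃ e ∈ H ∩ safe, ends e = s(x, y))
    let ends' : E → Sym2 (Quotient s) := fun e => (ends e).map (Quotient.mk s)
    let unsafeH : Finset E := H.filter (fun e => e ∉ safe)
    ∀ F' : Finset E, F' ⊆ unsafeH → F'.card ≤ k →
      EdgeConn ends' ↑(unsafeH \ F') := by
  intro s ends' unsafeH F' hF' hcard
  have hF'H : F' ⊆ H := fun f hf => (Finset.mem_filter.1 (hF' hf)).1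
  have hF'unsafe : ∀ f ∈ F', f ∉ safe := fun f hf => (Finset.mem_filter.1 (hF' hf)).2
  refine (hfeas F' hF'H hF'unsafe hcard).map _ Quotient.mk_surjective fun e he heT => ?_
  have he_safe : e ∈ H ∩ safe := by
    simp only [Finset.coe_sdiff, Set.mem_sdiff, Finset.mem_coe, unsafeH, Finset.mem_filter] at he heT
    grind
  exact Sym2.isDiag_map_mk_eqvGen fun x y hxy => ⟨e, he_safe, hxy⟩

open scoped Classical in
/-- If `H` is a spanning subgraph such that `H - F'` is connected for every set `F'` of at
most `k` unsafe edges (for `k = 1`: `(V, E(H))` is connected and `H - f` is connected for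
every unsafe `f ∈ E(H)`), then contracting all safe edges of `H` yields a
`(k+1)`-edge-connected graph: in the contracted graph (vertices are the classes of the
equivalence generated by the safe edges of `H`, edges are the unsafe edges of `H`),
removing any at most `k` edges leaves it connected. -/
theorem stmt_6 {V E : Type*} [Fintype V] [Fintype E] [DecidableEq E]
    (ends : E → Sym2 V) (safe : Finset E) (k : ℕ) (H : Finset E)
    (hspan : EdgeConn ends ↑H)
    (hfeas : ∀ F' : Finset E, F' ⊆ H → (∀ f ∈ F', f ∉ safe) → F'.card ≤ k →
      EdgeConn ends ↑(H \ F')) :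
    let s : Setoid V := Relation.EqvGen.setoid (fun x y => ∃ e ∈ H ∩ safe, ends e = s(x, y))
    let ends' : E → Sym2 (Quotient s) := fun e => (ends e).map (Quotient.mk s)
    let unsafeH : Finset E := H.filter (fun e => e ∉ safe)
    ∀ F' : Finset E, F' ⊆ unsafeH → F'.card ≤ k →
      EdgeConn ends' ↑(unsafeH \ F') :=
  stmt_6_general ends safe k H hfeas
end

section
/- Fix λ ≥ 1. The maximum over α ∈ [0,1] of the function λ·(1 + α·β(α)) subject to β(α)·(1 + α·(λ − 1 + λα)) = 1, i.e., the maximum of g(α) = λ·(1 + α/(1 + α(λ−1) + λα²)) over α ∈ [0,1], is attained at α = 1/√λ and equals λ(λ + 2√λ)/(2√λ + λ − 1). -/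
/-! With `s = √λ` the denominator `1 + α(λ - 1) + λα²` equals `(sα - 1)² + α(2s + λ - 1)`,
so `α / (1 + α(λ - 1) + λα²) ≤ 1 / (2s + λ - 1)` with equality exactly at `α = 1/s`; since
`1 + (2s + λ - 1) = λ + 2s`, the maximal value is `λ(λ + 2s)/(2s + λ - 1)`. -/

open Real

section

variable {lam : ℝ}

lemma one_add_mul_sub_one_add_mul_sq_eq (hlam : 0 ≤ lam) (a : ℝ) :
    1 + a * (lam - 1) + lam * a ^ 2 = (√lam * a - 1) ^ 2 + a * (2 * √lam + lam - 1) := by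
  linear_combination (-a ^ 2) * sq_sqrt hlam

lemma div_one_add_mul_sub_one_add_mul_sq_le (hlam : 1 ≤ lam) {a : ℝ} (ha : 0 ≤ a) :
    a / (1 + a * (lam - 1) + lam * a ^ 2) ≤ 1 / (2 * √lam + lam - 1) := by
  have hs : 1 ≤ √lam := one_le_sqrt.2 hlam
  have hD : 0 < 1 + a * (lam - 1) + lam * a ^ 2 := by nlinarith
  rw [div_le_div_iff₀ hD (by linarith), one_add_mul_sub_one_add_mul_sq_eq (by linarith)]
  nlinarith [sq_nonneg (√lam * a - 1)]

lemma div_one_add_mul_sub_one_add_mul_sq_inv_sqrt (hlam : 1 ≤ lam) :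
    1 / √lam / (1 + 1 / √lam * (lam - 1) + lam * (1 / √lam) ^ 2) = 1 / (2 * √lam + lam - 1) := by
  have hs : 1 ≤ √lam := one_le_sqrt.2 hlam
  rw [one_add_mul_sub_one_add_mul_sq_eq (by linarith), mul_one_div_cancel (by positivity),
    sub_self, zero_pow two_ne_zero, zero_add]
  field_simp

end

/-- The maximum over `α ∈ [0,1]` of `g α = λ·(1 + α/(1 + α(λ-1) + λα²))`
(equivalently of `λ·(1 + α·β)` subject to `β·(1 + α(λ - 1 + λα)) = 1`)
is attained at `α = 1/√λ` and equals `λ(λ + 2√λ)/(2√λ + λ - 1)`, for any fixed `λ ≥ 1`. -/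
theorem stmt_8 (lam : ℝ) (hlam : 1 ≤ lam) :
    let g : ℝ → ℝ := fun a => lam * (1 + a / (1 + a * (lam - 1) + lam * a ^ 2))
    (1 / Real.sqrt lam ∈ Set.Icc (0:ℝ) 1) ∧
    (∀ a ∈ Set.Icc (0:ℝ) 1, g a ≤ g (1 / Real.sqrt lam)) ∧
    g (1 / Real.sqrt lam) = lam * (lam + 2 * Real.sqrt lam) / (2 * Real.sqrt lam + lam - 1) := by
  intro g
  have hs : 1 ≤ √lam := one_le_sqrt.2 hlam
  have hc : 0 < 2 * √lam + lam - 1 := by linarith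
  have hmax : g (1 / √lam) = lam * (1 + 1 / (2 * √lam + lam - 1)) := by
    simp only [g, div_one_add_mul_sub_one_add_mul_sq_inv_sqrt hlam]
  refine ⟨⟨by positivity, (div_le_one (by positivity)).2 hs⟩, fun a ha => ?_, ?_⟩
  · rw [hmax]
    simp only [g]
    gcongr lam * (1 + ?_)
    exact div_one_add_mul_sub_one_add_mul_sq_le hlam ha.1
  · rw [hmax]
    field_simp
    ring
end

section
/- In the optimization problem maximize λ(1 + Σ_{j=1}^N α_j β_j) subject to Σ_{j=1}^N β_j(1 + α_j(λ − 1 + λα_j)) = 1, with 0 ≤ α_1 ≤ ⋯ ≤ α_N ≤ 1 and β_j ∈ [0,1], there is an optimal solution in which at most one β_k is nonzero; consequently the optimal value is independent of N and equals max over α ∈ [0,1] of λ(1 + α/(1 + α(λ − 1 + λα))). -/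
/-!
Write `w(a) = 1 + a(λ - 1 + λa)` for the cost of a unit of `β` placed at `α = a`, so the
constraint reads `Σ_j β_j w(α_j) = 1` and `w ≥ 1` on `[0,1]`. The objective `Σ_j α_j β_j` is then
an average of the ratios `α_j / w(α_j)` with weights `β_j w(α_j)` summing to one, hence at most the
largest ratio `α_k / w(α_k)`. That ratio is attained by putting all the mass `1 / w(α_k) ≤ 1` on
`k`, and is one of the values of the single-variable problem.
-/

open Finset Set

theorem le_biSup_of_bddAbove_image {α β : Type*} [ConditionallyCompleteLattice α] {f : β → α}
    {s : Set β} (hf : BddAbove (f '' s)) {c : β} (hc : c ∈ s) : f c ≤ ⨆ x ∈ s, f x :=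
  le_ciSup₂ (f := fun x (_ : x ∈ s) => f x)
    (hf.mono (by rintro _ ⟨_, ⟨x, rfl⟩, ⟨hx, rfl⟩⟩; exact ⟨x, hx, rfl⟩)) c hc

theorem sum_mul_le_mul_sum_of_le_mul {ι R : Type*} [CommSemiring R] [PartialOrder R]
    [IsOrderedRing R] (s : Finset ι) {c β w : ι → R} {M : R} (hβ : ∀ j ∈ s, 0 ≤ β j)
    (hc : ∀ j ∈ s, c j ≤ M * w j) : ∑ j ∈ s, c j * β j ≤ M * ∑ j ∈ s, β j * w j :=
  calc ∑ j ∈ s, c j * β j ≤ ∑ j ∈ s, M * w j * β j :=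
        sum_le_sum fun j hj => mul_le_mul_of_nonneg_right (hc j hj) (hβ j hj)
    _ = M * ∑ j ∈ s, β j * w j := by
        rw [mul_sum]; exact sum_congr rfl fun j _ => by ring

theorem exists_sum_mul_le_div_of_sum_mul_eq_one {ι : Type*} [Fintype ι] [Nonempty ι]
    {c β w : ι → ℝ} (hw : ∀ j, 0 < w j) (hβ : ∀ j, 0 ≤ β j) (hsum : ∑ j, β j * w j = 1) :
    ∃ k, ∑ j, c j * β j ≤ c k / w k := by
  obtain ⟨k, -, hk⟩ := exists_max_image Finset.univ (fun j => c j / w j) univ_nonempty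
  refine ⟨k, ?_⟩
  have hc : ∀ j ∈ Finset.univ, c j ≤ c k / w k * w j := fun j hj =>
    (div_le_iff₀ (hw j)).mp (hk j hj)
  simpa [hsum] using sum_mul_le_mul_sum_of_le_mul Finset.univ (fun j _ => hβ j) hc

def constraintWeight (lam a : ℝ) : ℝ := 1 + a * (lam - 1 + lam * a)

theorem one_le_constraintWeight {lam a : ℝ} (hlam : 1 ≤ lam) (ha : 0 ≤ a) :
    1 ≤ constraintWeight lam a := by
  have : 0 ≤ lam - 1 + lam * a := by nlinarith
  unfold constraintWeight
  nlinarith [mul_nonneg ha this]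

theorem div_constraintWeight_le_one {lam a : ℝ} (hlam : 1 ≤ lam) (ha : a ∈ Icc (0 : ℝ) 1) :
    a / constraintWeight lam a ≤ 1 := by
  have hw := one_le_constraintWeight hlam ha.1
  rw [div_le_one (by linarith)]
  linarith [ha.2]

theorem bddAbove_image_objective {lam : ℝ} (hlam : 1 ≤ lam) :
    BddAbove ((fun a => lam * (1 + a / constraintWeight lam a)) '' Icc 0 1) := by
  refine ⟨2 * lam, ?_⟩
  rintro _ ⟨a, ha, rfl⟩
  nlinarith [div_constraintWeight_le_one hlam ha]

theorem stmt_10_general (lam : ℝ) (hlam : 1 ≤ lam) (N : ℕ) (hN : 0 < N)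
    (α β : Fin N → ℝ)
    (hα : ∀ j, α j ∈ Set.Icc (0:ℝ) 1)
    (hβ : ∀ j, β j ∈ Set.Icc (0:ℝ) 1)
    (hcon : ∑ j, β j * (1 + α j * (lam - 1 + lam * α j)) = 1) :
    (∃ k : Fin N, ∃ β' : Fin N → ℝ, (∀ j, β' j ∈ Set.Icc (0:ℝ) 1) ∧
      (∀ j, j ≠ k → β' j = 0) ∧
      (∑ j, β' j * (1 + α j * (lam - 1 + lam * α j)) = 1) ∧
      lam * (1 + ∑ j, α j * β j) ≤ lam * (1 + ∑ j, α j * β' j)) ∧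
    lam * (1 + ∑ j, α j * β j) ≤
      ⨆ a ∈ Set.Icc (0:ℝ) 1, lam * (1 + a / (1 + a * (lam - 1 + lam * a))) := by
  set w := fun j => constraintWeight lam (α j)
  have hw : ∀ j, 1 ≤ w j := fun j => one_le_constraintWeight hlam (hα j).1
  have : Nonempty (Fin N) := Fin.pos_iff_nonempty.mp hN
  obtain ⟨k, hk⟩ := exists_sum_mul_le_div_of_sum_mul_eq_one (c := α)
    (fun j => one_pos.trans_le (hw j)) (fun j => (hβ j).1) hcon
  have hvalue : lam * (1 + ∑ j, α j * β j) ≤ lam * (1 + α k / w k) := by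
    gcongr
  let β' : Fin N → ℝ := Pi.single k (w k)⁻¹
  have hβ'w : ∑ j, β' j * w j = 1 := by
    simp [β', ← Pi.single_mul_left_apply, (one_pos.trans_le (hw k)).ne']
  have hβ'α : ∑ j, α j * β' j = α k / w k := by
    simp [β', ← Pi.single_mul_right_apply, div_eq_mul_inv]
  have hβ'mem : ∀ j, β' j ∈ Icc (0 : ℝ) 1 := by
    intro j
    rcases eq_or_ne j k with rfl | hj
    · simpa [β'] using ⟨(zero_lt_one.trans_le (hw j)).le, inv_le_one_of_one_le₀ (hw j)⟩
    · simp [β', hj]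
  exact ⟨⟨k, β', hβ'mem, fun j hj => Pi.single_eq_of_ne hj _, hβ'w, hβ'α ▸ hvalue⟩,
    hvalue.trans (le_biSup_of_bddAbove_image (bddAbove_image_objective hlam) (hα k))⟩

/-- In the problem of maximizing `λ(1 + Σ_j α_j β_j)` subject to
`Σ_j β_j (1 + α_j(λ - 1 + λ α_j)) = 1`, `0 ≤ α_1 ≤ ⋯ ≤ α_N ≤ 1`, `β_j ∈ [0,1]`:
any feasible point is dominated by a feasible point in which at most one `β_k`
is nonzero (with the same `α`'s), and consequently the objective value is bounded by
the (N-independent) single-variable maximum `sup_{a ∈ [0,1]} λ(1 + a/(1 + a(λ-1+λa)))`. -/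
theorem stmt_10 (lam : ℝ) (hlam : 1 ≤ lam) (N : ℕ) (hN : 0 < N)
    (α β : Fin N → ℝ)
    (hα : ∀ j, α j ∈ Set.Icc (0:ℝ) 1) (hmono : Monotone α)
    (hβ : ∀ j, β j ∈ Set.Icc (0:ℝ) 1)
    (hcon : ∑ j, β j * (1 + α j * (lam - 1 + lam * α j)) = 1) :
    (∃ k : Fin N, ∃ β' : Fin N → ℝ, (∀ j, β' j ∈ Set.Icc (0:ℝ) 1) ∧
      (∀ j, j ≠ k → β' j = 0) ∧
      (∑ j, β' j * (1 + α j * (lam - 1 + lam * α j)) = 1) ∧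
      lam * (1 + ∑ j, α j * β j) ≤ lam * (1 + ∑ j, α j * β' j)) ∧
    lam * (1 + ∑ j, α j * β j) ≤
      ⨆ a ∈ Set.Icc (0:ℝ) 1, lam * (1 + a / (1 + a * (lam - 1 + lam * a))) :=
  stmt_10_general lam hlam N hN α β hα hβ hcon
end

section
/- Let τ ≥ 1, λ ≥ 1. Setting α = (−1 + √(1 + 4τ))/(2τ) and solving w_A = w_B where w_A(b₀, b_α) = λ + λ(α b₀ + b_α) and w_B(b₀, b_α) = (τ + α)b₀ + b_α + (τ + 1/α)(1 − b₀ − b_α), the maximum over b₀, b_α ∈ [0,1] with b₀ + b_α ≤ 1 of min(w_A, w_B) is at most λ(4τ² + √(1+4τ) − 2τ − 1)/((1 − λ)√(1+4τ) + 2τ² + (2λ − 2)τ − 1 + λ). In particular for τ = λ = 2 this bound equals 14/5. -/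
/-!
Put `s = √(1+4τ)`, so that `s² = 1 + 4τ` and `1/α = (s+1)/2`. In terms of `x = α b₀ + b_α`,
`w_A = λ(1 + x)` increases and `w_B = ((2τ+s+1) - (2τ+s-1)x)/2` decreases, so `min(w_A, w_B)` is
at most the weighted mean `((2τ+s-1) w_A + 2λ w_B)/(2τ+s+2λ-1) = 2λ(2τ+s)/(2τ+s+2λ-1)`, the
value at the crossing point. The stated bound is this fraction with numerator and denominator
multiplied by `(2τ+1-s)/2`.
-/

theorem min_le_weighted_mean {p q : ℝ} (u v : ℝ) (hp : 0 ≤ p) (hq : 0 ≤ q) (hpq : 0 < p + q) :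
    min u v ≤ (p * u + q * v) / (p + q) :=
  calc min u v ≤ (p / (p + q)) • u + (q / (p + q)) • v :=
        Convex.min_le_combo u v (by positivity) (by positivity) (by field_simp)
    _ = (p * u + q * v) / (p + q) := by simp only [smul_eq_mul]; ring

section RootOfOnePlusFourTau

variable {τ s : ℝ} (hτ : τ ≠ 0) (hs : s ^ 2 = 1 + 4 * τ)
include hτ hs

theorem one_div_root_div_eq : 1 / ((-1 + s) / (2 * τ)) = (s + 1) / 2 := by
  have hs1 : -1 + s ≠ 0 := fun h => hτ (by nlinarith)
  field_simp
  linear_combination -hs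

theorem weighted_sum_eq_affine (b0 bα : ℝ) :
    let α := (-1 + s) / (2 * τ)
    (τ + α) * b0 + bα + (τ + 1 / α) * (1 - b0 - bα)
      = ((2 * τ + s + 1) - (2 * τ + s - 1) * (α * b0 + bα)) / 2 := by
  intro α
  rw [one_div_root_div_eq hτ hs]
  simp only [α]
  field_simp
  linear_combination b0 * hs

theorem bound_eq_crossing_value (lam : ℝ) :
    lam * (4 * τ ^ 2 + s - 2 * τ - 1) /
        ((1 - lam) * s + 2 * τ ^ 2 + (2 * lam - 2) * τ - 1 + lam)
      = 2 * lam * (2 * τ + s) / (2 * τ + s + 2 * lam - 1) := by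
  have hk : (2 * τ + 1 - s) / 2 ≠ 0 := fun h => hτ (by nlinarith)
  rw [← mul_div_mul_right (2 * lam * (2 * τ + s)) _ hk]
  congr 1
  · linear_combination lam * hs
  · linear_combination hs / 2

end RootOfOnePlusFourTau

/-- With `α = (-1 + √(1+4τ))/(2τ)`, for all `b₀, b_α ∈ [0,1]` with `b₀ + b_α ≤ 1`,
the minimum of `w_A = λ + λ(α b₀ + b_α)` and
`w_B = (τ + α) b₀ + b_α + (τ + 1/α)(1 - b₀ - b_α)` is at most
`λ(4τ² + √(1+4τ) - 2τ - 1)/((1 - λ)√(1+4τ) + 2τ² + (2λ - 2)τ - 1 + λ)`;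
in particular for `τ = λ = 2` this bound equals `14/5`. -/
theorem stmt_11 (τ lam : ℝ) (hτ : 1 ≤ τ) (hlam : 1 ≤ lam) :
    let α : ℝ := (-1 + Real.sqrt (1 + 4 * τ)) / (2 * τ)
    let bound : ℝ := lam * (4 * τ ^ 2 + Real.sqrt (1 + 4 * τ) - 2 * τ - 1) /
      ((1 - lam) * Real.sqrt (1 + 4 * τ) + 2 * τ ^ 2 + (2 * lam - 2) * τ - 1 + lam)
    (∀ b0 bα : ℝ, b0 ∈ Set.Icc (0:ℝ) 1 → bα ∈ Set.Icc (0:ℝ) 1 → b0 + bα ≤ 1 →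
      min (lam + lam * (α * b0 + bα))
          ((τ + α) * b0 + bα + (τ + 1 / α) * (1 - b0 - bα)) ≤ bound) ∧
    (τ = 2 → lam = 2 → bound = 14 / 5) := by
  intro α bound
  have hτ0 : τ ≠ 0 := by positivity
  have hs : √(1 + 4 * τ) ^ 2 = 1 + 4 * τ := Real.sq_sqrt (by linarith)
  have hbound := bound_eq_crossing_value hτ0 hs lam
  refine ⟨fun b0 bα _ _ _ => ?_, fun hτ2 hlam2 => ?_⟩
  · rw [weighted_sum_eq_affine hτ0 hs, show bound = _ from hbound]
    generalize α * b0 + bα = x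
    have hweight : 0 ≤ 2 * τ + √(1 + 4 * τ) - 1 := by linarith [Real.sqrt_nonneg (1 + 4 * τ)]
    calc _ ≤ _ := min_le_weighted_mean _ _ hweight (by linarith : (0:ℝ) ≤ 2 * lam)
          (by linarith)
      _ = _ := by congr 1 <;> ring
  · subst hτ2 hlam2
    have h3 : √(1 + 4 * 2 : ℝ) = 3 := by
      rw [Real.sqrt_eq_iff_mul_self_eq_of_pos (by norm_num)]; norm_num
    rw [show bound = _ from hbound, h3]
    norm_num
end

section
/- Let G be a graph on 4 vertices consisting of a triangle of safe edges of weight 1 and a fourth vertex joined to each triangle vertex by an unsafe edge of weight 0. Then the LP relaxation of the cut formulation of FGC (each cut must have total value ≥ 2, where safe edges count twice) has optimal value at most 3/4, while every integral feasible FGC solution has weight at least 2; hence the integrality gap of this formulation is at least 8/3. -/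
theorem EdgeConn.exists_incident {V E : Type*} [Nontrivial V] {ends : E → Sym2 V} {T : Set E}
    (h : EdgeConn ends T) (a : V) : ∃ e ∈ T, ∃ c, ends e = s(a, c) := by
  obtain ⟨b, hba⟩ := exists_ne a
  rcases (h a b).cases_head with hab | ⟨c, ⟨e, he, hec⟩, -⟩
  · exact absurd hab.symm hba
  · exact ⟨e, he, c, hec⟩

theorem Sym2.exists_mk_eq_mem_notMem_iff {α : Type*} {S : Finset α} {a b : α} :
    (∃ x ∈ S, ∃ y ∉ S, s(a, b) = s(x, y)) ↔ Xor (a ∈ S) (b ∈ S) := by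
  constructor
  · rintro ⟨x, hx, y, hy, hxy⟩
    rcases Sym2.eq_iff.1 hxy with ⟨rfl, rfl⟩ | ⟨rfl, rfl⟩
    · exact Or.inl ⟨hx, hy⟩
    · exact Or.inr ⟨hx, hy⟩
  · rintro (⟨ha, hb⟩ | ⟨hb, ha⟩)
    · exact ⟨a, ha, b, hb, rfl⟩
    · exact ⟨b, hb, a, ha, Sym2.eq_swap⟩

open Finset in
theorem Finset.two_le_card_inter_of_meets_pairs {α : Type*} [DecidableEq α] {Z : Finset α}
    {a b c : α} (hab : a ≠ b) (hac : a ≠ c) (hbc : b ≠ c)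
    (h₁ : a ∈ Z ∨ b ∈ Z) (h₂ : a ∈ Z ∨ c ∈ Z) (h₃ : b ∈ Z ∨ c ∈ Z) :
    2 ≤ #(Z ∩ {a, b, c}) := by
  rw [Nat.succ_le_iff, Finset.one_lt_card]
  rcases h₁ with ha | hb
  · rcases h₃ with hb | hc
    · exact ⟨a, by simp [ha], b, by simp [hb], hab⟩
    · exact ⟨a, by simp [ha], c, by simp [hc], hac⟩
  · rcases h₂ with ha | hc
    · exact ⟨a, by simp [ha], b, by simp [hb], hab⟩
    · exact ⟨b, by simp [hb], c, by simp [hc], hbc⟩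

namespace FGCGap

def ends : Fin 6 → Sym2 (Fin 4) := ![s(0, 1), s(0, 2), s(1, 2), s(0, 3), s(1, 3), s(2, 3)]

def safe : Finset (Fin 6) := {0, 1, 2}

noncomputable def lpPoint (e : Fin 6) : ℝ := if e ∈ safe then 1 / 4 else 1

theorem lpPoint_mem_Icc (e : Fin 6) : lpPoint e ∈ Set.Icc (0 : ℝ) 1 := by
  unfold lpPoint
  split <;> norm_num

open scoped Classical in
theorem two_le_cut_lpPoint (S : Finset (Fin 4)) (hS : S.Nonempty) (hSu : S ≠ Finset.univ) :
    2 ≤ ∑ e ∈ Finset.univ.filter (fun e => ∃ a ∈ S, ∃ b ∉ S, ends e = s(a, b)),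
      (if e ∈ safe then 2 * lpPoint e else lpPoint e) := by
  have hS' : (0 : Fin 4) ∈ S ∨ 1 ∈ S ∨ 2 ∈ S ∨ 3 ∈ S := by
    obtain ⟨v, hv⟩ := hS
    fin_cases v <;> simp_all
  have hSu' : ¬ ((0 : Fin 4) ∈ S ∧ 1 ∈ S ∧ 2 ∈ S ∧ 3 ∈ S) := by
    rintro ⟨h0, h1, h2, h3⟩
    exact hSu (Finset.eq_univ_iff_forall.2 fun v => by fin_cases v <;> assumption)
  rw [Finset.sum_filter, Fin.sum_univ_six]
  simp only [ends, safe, lpPoint, Matrix.cons_val, Sym2.exists_mk_eq_mem_notMem_iff]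
  by_cases h0 : (0 : Fin 4) ∈ S <;> by_cases h1 : (1 : Fin 4) ∈ S <;>
    by_cases h2 : (2 : Fin 4) ∈ S <;> by_cases h3 : (3 : Fin 4) ∈ S <;>
    simp [h0, h1, h2, h3, Xor] at hS' hSu' ⊢ <;> norm_num

theorem sum_weight_mul_lpPoint :
    ∑ e, (if e ∈ safe then 1 else 0 : ℝ) * lpPoint e = 3 / 4 := by
  simp [safe, lpPoint, Fin.sum_univ_six]
  norm_num

theorem two_le_card_inter_safe (Z : Finset (Fin 6))
    (hZ : ∀ f ∉ safe, EdgeConn ends ↑(Z.erase f)) : 2 ≤ (Z ∩ safe).card := by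
  have h01 : (0 : Fin 6) ∈ Z ∨ 1 ∈ Z := by
    obtain ⟨e, he, c, hec⟩ := (hZ 3 (by decide)).exists_incident 0
    fin_cases e <;> simp_all [ends]
  have h02 : (0 : Fin 6) ∈ Z ∨ 2 ∈ Z := by
    obtain ⟨e, he, c, hec⟩ := (hZ 4 (by decide)).exists_incident 1
    fin_cases e <;> simp_all [ends]
  have h12 : (1 : Fin 6) ∈ Z ∨ 2 ∈ Z := by
    obtain ⟨e, he, c, hec⟩ := (hZ 5 (by decide)).exists_incident 2
    fin_cases e <;> simp_all [ends]
  exact Finset.two_le_card_inter_of_meets_pairs (by decide) (by decide) (by decide) h01 h02 h12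

end FGCGap

open scoped Classical in
/-- **Integrality gap instance.** For the graph on 4 vertices consisting of a triangle of
safe edges of weight 1 and a fourth vertex joined to each triangle vertex by an unsafe
edge of weight 0: the LP relaxation of the cut formulation of FGC (every cut has value
at least 2, safe edges counting twice) has a feasible solution of cost at most `3/4`,
while every integral feasible FGC solution has weight at least `2`
(hence the integrality gap is at least `8/3`). -/
theorem stmt_12 :
    let ends : Fin 6 → Sym2 (Fin 4) :=
      ![s(0, 1), s(0, 2), s(1, 2), s(0, 3), s(1, 3), s(2, 3)]
    let safe : Finset (Fin 6) := {0, 1, 2}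
    let w : Fin 6 → ℝ := fun e => if e ∈ safe then 1 else 0
    let crosses : Fin 6 → Finset (Fin 4) → Prop := fun e S => ∃ a ∈ S, ∃ b ∉ S, ends e = s(a, b)
    (∃ x : Fin 6 → ℝ, (∀ e, x e ∈ Set.Icc (0:ℝ) 1) ∧
      (∀ S : Finset (Fin 4), S.Nonempty → S ≠ Finset.univ →
        2 ≤ ∑ e ∈ Finset.univ.filter (fun e => crosses e S),
              (if e ∈ safe then 2 * x e else x e)) ∧
      ∑ e, w e * x e ≤ 3 / 4) ∧
    (∀ Z : Finset (Fin 6), (∀ f : Fin 6, f ∉ safe → EdgeConn ends ↑(Z.erase f)) →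
      2 ≤ ∑ e ∈ Z, w e) := by
  intro ends safe w crosses
  refine ⟨⟨FGCGap.lpPoint, FGCGap.lpPoint_mem_Icc, FGCGap.two_le_cut_lpPoint,
    FGCGap.sum_weight_mul_lpPoint.le⟩, fun Z hZ => ?_⟩
  have hw : ∑ e ∈ Z, w e = (Z ∩ safe).card := by
    simp only [w, Finset.sum_boole, Finset.filter_mem_eq_inter]
  rw [hw]
  exact_mod_cast FGCGap.two_le_card_inter_safe Z hZ
end
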